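/- For the one-soliton solution u(x,t) = α e^{iφ} e^{i(α²-β²)t + iεβx} / cosh(α(x - x₀ - 2εβt)), the time-dependent boundary condition i u_t(0,t) = (α² + β²) u(0,t) − 2|u(0,t)|² u(0,t) − 2 sign(x₀ + 2εβt) · u_x(0,t) √(α² − |u(0,t)|²) holds for all t with x₀ + 2εβt ≠ 0. -/

import Mathlib

/-!
With `ξ = α (x - x₀ - 2εβt)`, both partial derivatives of the soliton are the soliton itself times
a logarithmic derivative: `u_t = (i(α² - β²) + 2εβα tanh ξ) u` and `u_x = (iεβ - α tanh ξ) u`.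
Moreover `|u| = α sech ξ`, so `√(α² - |u|²) = α |tanh ξ|`, and at `x = 0` we have
`ξ = -α (x₀ + 2εβt)` with `α > 0`, so the sign factor turns `α |tanh ξ|` into `-α tanh ξ`.
The boundary condition is then an identity in `tanh ξ`, using `sech² ξ = 1 - tanh² ξ`.
-/

section

open Complex

theorem hasDerivAt_of_eq_mul_cexp_div_ccosh {f : ℝ → ℂ} {A c d p q : ℂ} {x : ℝ}
    (hf : ∀ s : ℝ, f s = A * exp (c * s + d) / cosh (p * s + q)) (h : cosh (p * x + q) ≠ 0) :
    HasDerivAt f ((c - p * tanh (p * x + q)) * f x) x := by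
  have hlin : ∀ a b : ℂ, HasDerivAt (fun s : ℂ => a * s + b) a x := fun a b => by
    simpa using ((hasDerivAt_id (x : ℂ)).const_mul a).add_const b
  obtain rfl := funext hf
  refine ((((hlin c d).cexp).const_mul A).div (hlin p q).ccosh h).comp_ofReal.congr_deriv ?_
  beta_reduce
  generalize p * (x : ℂ) + q = z at h ⊢
  rw [tanh_eq_sinh_div_cosh]
  field_simp

noncomputable def oneSoliton (α β φ x₀ ε x t : ℝ) : ℂ :=
  α * exp (I * φ) * exp (I * ((α ^ 2 - β ^ 2) * t) + I * ε * β * x) /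
    cosh (α * (x - x₀ - 2 * ε * β * t))

variable (α β φ x₀ ε : ℝ)

theorem oneSoliton_arg_eq_ofReal (x t : ℝ) :
    (α * (x - x₀ - 2 * ε * β * t) : ℂ) = ↑(α * (x - x₀ - 2 * ε * β * t)) := by
  push_cast; rfl

theorem cosh_oneSoliton_arg_ne_zero (x t : ℝ) : cosh (α * (x - x₀ - 2 * ε * β * t)) ≠ 0 := by
  rw [oneSoliton_arg_eq_ofReal, ← ofReal_cosh]
  exact_mod_cast (Real.cosh_pos _).ne'

theorem hasDerivAt_oneSoliton_time (x t : ℝ) :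
    HasDerivAt (oneSoliton α β φ x₀ ε x)
      ((I * (α ^ 2 - β ^ 2) + 2 * ε * β * α * Real.tanh (α * (x - x₀ - 2 * ε * β * t)))
        * oneSoliton α β φ x₀ ε x t) t := by
  have harg : ∀ s : ℝ, (-2 * ε * β * α * s + α * (x - x₀) : ℂ) = α * (x - x₀ - 2 * ε * β * s) :=
    fun s => by ring
  refine (hasDerivAt_of_eq_mul_cexp_div_ccosh (A := α * exp (I * φ)) (c := I * (α ^ 2 - β ^ 2))
    (d := I * ε * β * x) (p := -2 * ε * β * α) (q := α * (x - x₀)) (fun s => ?_) ?_).congr_deriv ?_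
  · rw [oneSoliton, harg]; ring_nf
  · rw [harg]; exact cosh_oneSoliton_arg_ne_zero α β x₀ ε x t
  · rw [harg, oneSoliton_arg_eq_ofReal, ← ofReal_tanh]; ring

theorem hasDerivAt_oneSoliton_space (x t : ℝ) :
    HasDerivAt (fun y => oneSoliton α β φ x₀ ε y t)
      ((I * ε * β - α * Real.tanh (α * (x - x₀ - 2 * ε * β * t))) * oneSoliton α β φ x₀ ε x t) x := by
  have harg : ∀ y : ℝ, (α * y + -α * (x₀ + 2 * ε * β * t) : ℂ) = α * (y - x₀ - 2 * ε * β * t) :=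
    fun y => by ring
  refine (hasDerivAt_of_eq_mul_cexp_div_ccosh (A := α * exp (I * φ)) (c := I * ε * β)
    (d := I * ((α ^ 2 - β ^ 2) * t)) (p := α) (q := -α * (x₀ + 2 * ε * β * t))
    (fun y => ?_) ?_).congr_deriv ?_
  · rw [oneSoliton, harg]; ring_nf
  · rw [harg]; exact cosh_oneSoliton_arg_ne_zero α β x₀ ε x t
  · rw [harg, oneSoliton_arg_eq_ofReal, ← ofReal_tanh]

theorem norm_oneSoliton (x t : ℝ) :
    ‖oneSoliton α β φ x₀ ε x t‖ = |α| / Real.cosh (α * (x - x₀ - 2 * ε * β * t)) := by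
  have hphase : I * ((α ^ 2 - β ^ 2) * t) + I * ε * β * x =
      I * ↑((α ^ 2 - β ^ 2) * t + ε * β * x) := by
    push_cast; ring
  rw [oneSoliton, hphase, oneSoliton_arg_eq_ofReal, ← ofReal_cosh, norm_div, norm_mul, norm_mul,
    norm_exp_I_mul_ofReal, norm_exp_I_mul_ofReal, norm_real, norm_real, Real.norm_eq_abs,
    Real.norm_eq_abs, abs_of_pos (Real.cosh_pos _), mul_one, mul_one]

end

theorem Real.sq_div_cosh (a x : ℝ) : (a / Real.cosh x) ^ 2 = a ^ 2 * (1 - Real.tanh x ^ 2) := by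
  have := Real.cosh_pos x
  rw [Real.tanh_eq_sinh_div_cosh]
  field_simp
  linear_combination -a ^ 2 * Real.cosh_sq x

theorem Real.sqrt_sq_sub_sq_div_cosh {a : ℝ} (ha : 0 ≤ a) (x : ℝ) :
    √(a ^ 2 - (a / Real.cosh x) ^ 2) = a * |Real.tanh x| := by
  rw [Real.sq_div_cosh, show a ^ 2 - a ^ 2 * (1 - Real.tanh x ^ 2) = (a * Real.tanh x) ^ 2 by ring,
    Real.sqrt_sq_eq_abs, abs_mul, abs_of_nonneg ha]

theorem Real.sign_mul_abs_tanh_mul {a : ℝ} (ha : 0 < a) (x : ℝ) :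
    Real.sign x * |Real.tanh (a * x)| = Real.tanh (a * x) := by
  rw [Real.tanh_eq_sinh_div_cosh, abs_div, abs_of_pos (Real.cosh_pos _)]
  rcases lt_trichotomy x 0 with hx | rfl | hx
  · rw [Real.sign_of_neg hx, abs_of_neg (Real.sinh_neg_iff.2 (mul_neg_of_pos_of_neg ha hx))]
    ring
  · simp
  · rw [Real.sign_of_pos hx, abs_of_pos (Real.sinh_pos_iff.2 (mul_pos ha hx)), one_mul]

theorem one_soliton_time_dependent_BC_general (α β φ x₀ ε : ℝ) (hα : 0 < α) (u : ℝ → ℝ → ℂ)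
    (hu : ∀ x t : ℝ, u x t =
      (α : ℂ) * Complex.exp (Complex.I * (φ : ℂ)) *
        Complex.exp (Complex.I * (((α : ℂ) ^ 2 - (β : ℂ) ^ 2) * (t : ℂ)) +
          Complex.I * (ε : ℂ) * (β : ℂ) * (x : ℂ)) /
        Complex.cosh ((α : ℂ) * ((x : ℂ) - (x₀ : ℂ) - 2 * (ε : ℂ) * (β : ℂ) * (t : ℂ)))) :
    ∀ t : ℝ, x₀ + 2 * ε * β * t ≠ 0 →
      Complex.I * deriv (fun s : ℝ => u 0 s) t =
        ((α : ℂ) ^ 2 + (β : ℂ) ^ 2) * u 0 t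
          - 2 * (((‖u 0 t‖ : ℝ) : ℂ)) ^ 2 * u 0 t
          - 2 * ((Real.sign (x₀ + 2 * ε * β * t) : ℝ) : ℂ) *
              deriv (fun y : ℝ => u y t) 0 *
              ((Real.sqrt (α ^ 2 - ‖u 0 t‖ ^ 2) : ℝ) : ℂ) := by
  intro t _
  obtain rfl : u = oneSoliton α β φ x₀ ε := funext₂ hu
  have hphase : α * (0 - x₀ - 2 * ε * β * t) = -(α * (x₀ + 2 * ε * β * t)) := by ring
  have hnorm : ‖oneSoliton α β φ x₀ ε 0 t‖ = α / Real.cosh (α * (x₀ + 2 * ε * β * t)) := by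
    rw [norm_oneSoliton, hphase, Real.cosh_neg, abs_of_pos hα]
  rw [(hasDerivAt_oneSoliton_time α β φ x₀ ε 0 t).deriv,
    (hasDerivAt_oneSoliton_space α β φ x₀ ε 0 t).deriv, hnorm,
    Real.sqrt_sq_sub_sq_div_cosh hα.le, hphase, Real.tanh_neg]
  set T := Real.tanh (α * (x₀ + 2 * ε * β * t))
  have hnorm_sq : ((α / Real.cosh (α * (x₀ + 2 * ε * β * t)) : ℝ) : ℂ) ^ 2 = α ^ 2 * (1 - T ^ 2) := by
    exact_mod_cast Real.sq_div_cosh α _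
  have hsign : (Real.sign (x₀ + 2 * ε * β * t) : ℂ) * (α * |T|) = α * T := by
    exact_mod_cast (mul_left_comm _ _ _).trans (congrArg (α * ·) (Real.sign_mul_abs_tanh_mul hα _))
  rw [hnorm_sq]
  push_cast
  linear_combination (α ^ 2 - β ^ 2) * oneSoliton α β φ x₀ ε 0 t * Complex.I_sq
    + 2 * (Complex.I * ε * β + α * T) * oneSoliton α β φ x₀ ε 0 t * hsign

/-- The one-soliton solution satisfies the time-dependent boundary condition
`i u_t(0,t) = (α²+β²)u(0,t) − 2|u(0,t)|²u(0,t)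
  − 2 sign(x₀+2εβt) u_x(0,t) √(α² − |u(0,t)|²)`
for all `t` with `x₀ + 2εβt ≠ 0`. -/
theorem one_soliton_time_dependent_BC (α β φ x₀ ε : ℝ) (hα : 0 < α) (hβ : 0 < β)
    (hε : ε = 1 ∨ ε = -1) (u : ℝ → ℝ → ℂ)
    (hu : ∀ x t : ℝ, u x t =
      (α : ℂ) * Complex.exp (Complex.I * (φ : ℂ)) *
        Complex.exp (Complex.I * (((α : ℂ) ^ 2 - (β : ℂ) ^ 2) * (t : ℂ)) +
          Complex.I * (ε : ℂ) * (β : ℂ) * (x : ℂ)) /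
        Complex.cosh ((α : ℂ) * ((x : ℂ) - (x₀ : ℂ) - 2 * (ε : ℂ) * (β : ℂ) * (t : ℂ)))) :
    ∀ t : ℝ, x₀ + 2 * ε * β * t ≠ 0 →
      Complex.I * deriv (fun s : ℝ => u 0 s) t =
        ((α : ℂ) ^ 2 + (β : ℂ) ^ 2) * u 0 t
          - 2 * (((‖u 0 t‖ : ℝ) : ℂ)) ^ 2 * u 0 t
          - 2 * ((Real.sign (x₀ + 2 * ε * β * t) : ℝ) : ℂ) *
              deriv (fun y : ℝ => u y t) 0 *
              ((Real.sqrt (α ^ 2 - ‖u 0 t‖ ^ 2) : ℝ) : ℂ) :=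
  one_soliton_time_dependent_BC_general α β φ x₀ ε hα u hu
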